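/- A subset A' ⊆ A satisfies 'T_false ∪ A' does not entail false' if and only if T ∪ A' is consistent. Consequently, A' is a minimal instance deletion of false from A (w.r.t. T_false) if and only if A' is a minimal ABox repair of A w.r.t. T. -/
import Mathlib


/-- A clause `H ← B`: head and body are finite sets of ground atoms. -/
structure Clause (α : Type) where
  head : Finset α
  body : Finset α
deriving DecidableEq

/-- An interpretation (a set of ground atoms) satisfies the clause `H ← B`. -/
def satClause {α : Type} (I : Set α) (C : Clause α) : Prop :=
  (∀ b ∈ C.body, b ∈ I) → ∃ h ∈ C.head, h ∈ I

/-- An interpretation satisfies a set of clauses. -/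
def satSet {α : Type} (I : Set α) (N : Set (Clause α)) : Prop :=
  ∀ C ∈ N, satClause I C

/-- `T ∪ A ⊨ D`: every model of `T` containing all atoms of `A` satisfies `D`. -/
def entails {α : Type} (T : Set (Clause α)) (A : Set α) (D : α) : Prop :=
  ∀ I : Set α, satSet I T → A ⊆ I → D ∈ I

/-- `T ∪ A` is consistent: some model of `T` contains all atoms of `A`. -/
def consistentWith {α : Type} (T : Set (Clause α)) (A : Set α) : Prop :=
  ∃ I : Set α, satSet I T ∧ A ⊆ I

variable {V : Type} [DecidableEq V]

/-- Replace an empty head `⊥` by the fresh atom `false` (modeled by `none` in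
`Option V`); nonempty heads and bodies are kept (embedded via `some`). -/
def falseClause (C : Clause V) : Clause (Option V) :=
  ⟨if C.head = ∅ then {none} else C.head.image some, C.body.image some⟩

/-- `T_false`: the result of replacing every empty head `⊥` in `T` by `false`. -/
def Tfalse (T : Set (Clause V)) : Set (Clause (Option V)) :=
  falseClause '' T


lemma key {V : Type} [DecidableEq V] (T : Set (Clause V)) (B : Finset V) :
    ¬ entails (Tfalse T) (some '' (↑B : Set V)) none ↔ consistentWith T ↑B := by
  constructor
  · intro h
    simp only [entails, not_forall] at h
    obtain ⟨J, hJ, hBJ, hnone⟩ := h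
    refine ⟨{v | some v ∈ J}, ?_, ?_⟩
    · intro C hC hbody
      have hsat := hJ (falseClause C) ⟨C, hC, rfl⟩
      have : ∀ b ∈ (falseClause C).body, b ∈ J := by
        intro b hb
        simp only [falseClause, Finset.mem_image] at hb
        obtain ⟨a, ha, rfl⟩ := hb
        exact hbody a ha
      obtain ⟨h, hh, hhJ⟩ := hsat this
      simp only [falseClause] at hh
      by_cases hemp : C.head = ∅
      · simp [hemp] at hh
        subst hh
        exact absurd hhJ hnone
      · simp [hemp, Finset.mem_image] at hh
        obtain ⟨a, ha, rfl⟩ := hh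
        exact ⟨a, ha, hhJ⟩
    · intro v hv
      exact hBJ ⟨v, hv, rfl⟩
  · rintro ⟨I, hI, hBI⟩ hent
    have := hent (some '' I) ?_ ?_
    · simp at this
    · rintro C ⟨D, hD, rfl⟩ hbody
      have hDb : ∀ b ∈ D.body, b ∈ I := by
        intro b hb
        have : (some b : Option V) ∈ some '' I := by
          apply hbody
          simp [falseClause, Finset.mem_image]
          exact hb
        simpa using this
      obtain ⟨h, hh, hhI⟩ := hI D hD hDb
      refine ⟨some h, ?_, ⟨h, hhI, rfl⟩⟩
      have hne : D.head ≠ ∅ := by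
        intro he; rw [he] at hh; simp at hh
      simp [falseClause, hne, Finset.mem_image]
      exact hh
    · rintro x ⟨v, hv, rfl⟩
      exact ⟨v, hBI hv, rfl⟩

/-- for `A' ⊆ A`, `T_false ∪ A' ⊭ false` iff `T ∪ A'` is
consistent; consequently, `A'` is a minimal instance deletion of `false` from
`A` w.r.t. `T_false` iff `A'` is a minimal ABox repair of `A` w.r.t. `T`. -/
theorem tfalse_deletion_iff_repair (T : Set (Clause V))
    (hT : ∃ I : Set V, satSet I T) (A A' : Finset V) (hA' : A' ⊆ A) :
    (¬ entails (Tfalse T) (some '' (↑A' : Set V)) none ↔ consistentWith T ↑A') ∧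
    ((¬ entails (Tfalse T) (some '' (↑A' : Set V)) none ∧
        ∀ A'' : Finset V, A' ⊂ A'' → A'' ⊆ A →
          entails (Tfalse T) (some '' (↑A'' : Set V)) none) ↔
      (consistentWith T ↑A' ∧
        ∀ A'' : Finset V, A' ⊂ A'' → A'' ⊆ A → ¬ consistentWith T ↑A'')) := by
  refine ⟨key T A', ?_⟩
  rw [key T A']
  constructor
  · rintro ⟨h1, h2⟩
    exact ⟨h1, fun A'' hsub hsubA hc => ((key T A'').mpr hc) (h2 A'' hsub hsubA)⟩
  · rintro ⟨h1, h2⟩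
    refine ⟨h1, fun A'' hsub hsubA => ?_⟩
    by_contra hne
    exact h2 A'' hsub hsubA ((key T A'').mp hne)
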